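/- Let σ, τ be weight functions in the class W₀ with associated weight matrices {S^(ℓ) : ℓ > 0} and {T^(ℓ) : ℓ > 0}. For all ℓ, ℓ₁ > 0, the associated weight function of the pointwise product sequence S^(ℓ)·T^(ℓ₁) satisfies ω_{S^(ℓ)·T^(ℓ₁)}(t) = (ω_{S^(ℓ)} ⋆̌ ω_{T^(ℓ₁)})(t) for every t ≥ 0, and ω_{S^(ℓ)·T^(ℓ₁)} ~ σ⋆̌τ. In particular, ω_{S^(ℓ)·T^(ℓ)} ~ ω_{S^(j)·T^(j)} for all ℓ, j > 0. -/

import Mathlib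

open Real Filter Asymptotics Set
open scoped ENNReal Topology

noncomputable section

/-- A weight function: nonnegative, non-decreasing on `[0,∞)`, tending to `+∞`. -/
def IsWeightFct (ω : ℝ → ℝ) : Prop :=
  (∀ t : ℝ, 0 ≤ ω t) ∧ MonotoneOn ω (Ici (0:ℝ)) ∧ Tendsto ω atTop atTop

/-- Condition `(ω₁)`: `ω(2t) = O(ω(t))`. -/
def HasOm1 (ω : ℝ → ℝ) : Prop :=
  ∃ L : ℝ, 1 ≤ L ∧ ∀ t : ℝ, 0 ≤ t → ω (2 * t) ≤ L * (ω t + 1)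

/-- Condition `(ω₆)`. -/
def HasOm6 (ω : ℝ → ℝ) : Prop :=
  ∃ H : ℝ, 1 ≤ H ∧ ∀ t : ℝ, 0 ≤ t → 2 * ω t ≤ ω (H * t) + H

/-- The class `W₀` of (normalized) Braun-Meise-Taylor weight functions. -/
def IsW0 (ω : ℝ → ℝ) : Prop :=
  IsWeightFct ω ∧ ContinuousOn ω (Ici (0:ℝ)) ∧ (∀ t ∈ Icc (0:ℝ) 1, ω t = 0) ∧
    ((fun t : ℝ => Real.log t) =o[atTop] ω) ∧
    ConvexOn ℝ univ (fun y : ℝ => ω (Real.exp y))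

/-- Legendre-Fenchel-Young conjugate `φ*_ω`. -/
def phiStar (ω : ℝ → ℝ) (x : ℝ) : ℝ :=
  sSup {z : ℝ | ∃ y : ℝ, 0 ≤ y ∧ z = x * y - ω (Real.exp y)}

/-- The sequence `W^(ℓ)` of the associated weight matrix of `ω`. -/
def assocSeq (ω : ℝ → ℝ) (ℓ : ℝ) (p : ℕ) : ℝ :=
  Real.exp ((1 / ℓ) * phiStar ω (ℓ * (p : ℝ)))

/-- The weight function `ω_M` associated with a sequence `M`. -/
def omegaSeq (M : ℕ → ℝ) (t : ℝ) : ℝ :=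
  sSup {z : ℝ | ∃ p : ℕ, z = Real.log (t ^ p / M p)}

/-- Property `(P_{ω,γ})`. -/
def gammaProp (ω : ℝ → ℝ) (g : ℝ) : Prop :=
  ∃ K : ℝ, 1 < K ∧
    limsup (fun t : ℝ => ((ω (K ^ g * t) / ω t : ℝ) : EReal)) atTop < (K : EReal)

/-- Property `(P̄_{ω,γ})`. -/
def gammaBarProp (ω : ℝ → ℝ) (g : ℝ) : Prop :=
  ∃ A : ℝ, 1 < A ∧
    (A : EReal) < liminf (fun t : ℝ => ((ω (A ^ g * t) / ω t : ℝ) : EReal)) atTop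

/-- The growth index `γ(ω) ∈ [0,∞]`. -/
def gammaIdx (ω : ℝ → ℝ) : ℝ≥0∞ :=
  ⨆ (g : ℝ) (_ : 0 < g ∧ gammaProp ω g), ENNReal.ofReal g

/-- The growth index `γ̄(ω) ∈ [0,∞]` (`+∞` if no admissible `γ` exists). -/
def gammaBarIdx (ω : ℝ → ℝ) : ℝ≥0∞ :=
  sInf (ENNReal.ofReal '' {g : ℝ | 0 < g ∧ gammaBarProp ω g})

/-- Generalized lower Legendre conjugate `σ ⋆̌ τ`. -/
def lowerConj (σ τ : ℝ → ℝ) (t : ℝ) : ℝ :=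
  sInf {z : ℝ | ∃ s : ℝ, 0 < s ∧ z = σ s + τ (t / s)}

/-- Generalized upper Legendre conjugate `σ ⋆̂ τ`. -/
def upperConj (σ τ : ℝ → ℝ) (t : ℝ) : ℝ :=
  if t = 0 then σ 0 - τ 0 else sSup {z : ℝ | ∃ s : ℝ, 0 ≤ s ∧ z = σ s - τ (s / t)}

/-- `σ ⋆̂ τ` is well-defined, i.e. `σ⋆̂τ(t) < +∞` for every `t`. -/
def UpperConjWD (σ τ : ℝ → ℝ) : Prop :=
  ∀ t : ℝ, 0 < t → BddAbove {z : ℝ | ∃ s : ℝ, 0 ≤ s ∧ z = σ s - τ (s / t)}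

/-- Lower Legendre envelope `h_⋆`. -/
def lowerEnv (h : ℝ → ℝ) (t : ℝ) : ℝ :=
  sInf {z : ℝ | ∃ u : ℝ, 0 < u ∧ z = h u + t * u}

/-- Upper Legendre envelope `h^⋆`. -/
def upperEnv (h : ℝ → ℝ) (t : ℝ) : ℝ :=
  sSup {z : ℝ | ∃ s : ℝ, 0 ≤ s ∧ z = h s - t * s}

/-- `(((ω^ι)^α)_⋆)^{1/α}` (which equals `ω ⋆̌ id^{1/α}`). -/
def lowerCompose (ω : ℝ → ℝ) (α : ℝ) (t : ℝ) : ℝ :=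
  lowerEnv (fun u : ℝ => ω (1 / u ^ α)) (t ^ (1 / α))

/-- `(((ω^α)^⋆)^ι)^{1/α}` (which equals `ω ⋆̂ id^{1/α}`). -/
def upperCompose (ω : ℝ → ℝ) (α : ℝ) (t : ℝ) : ℝ :=
  upperEnv (fun s : ℝ => ω (s ^ α)) (1 / t ^ (1 / α))

/-- Equivalence `σ ∼ τ` of weight functions. -/
def WeightEquiv (σ τ : ℝ → ℝ) : Prop :=
  σ =O[atTop] τ ∧ τ =O[atTop] σ

/-- Relation `M ≼ N` for sequences: `sup_{p ≥ 1} (M_p/N_p)^{1/p} < ∞`. -/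
def seqPrec (M N : ℕ → ℝ) : Prop :=
  ∃ C : ℝ, ∀ p : ℕ, 1 ≤ p → (M p / N p) ^ (1 / (p : ℝ)) ≤ C

/-- Relation `M ◁ N` for sequences: `(M_p/N_p)^{1/p} → 0`. -/
def seqTriangle (M N : ℕ → ℝ) : Prop :=
  Tendsto (fun p : ℕ => (M p / N p) ^ (1 / (p : ℝ))) atTop (𝓝 0)

/-- Equivalence `M ≈ N` of sequences. -/
def seqEquiv (M N : ℕ → ℝ) : Prop := seqPrec M N ∧ seqPrec N M

/-- The Gevrey sequence `G^α`. -/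
def gevrey (α : ℝ) (p : ℕ) : ℝ := (p.factorial : ℝ) ^ α

/-- The quotient sequence `μ_p = M_p / M_{p-1}`, `μ₀ = 1`. -/
def quotSeq (M : ℕ → ℝ) : ℕ → ℝ
  | 0 => 1
  | (p + 1) => M (p + 1) / M p

/-- Condition `(β,Q)`: `liminf_{p} μ_{Qp}/μ_p > Q^β`. -/
def condBQ (M : ℕ → ℝ) (β : ℝ) (Q : ℕ) : Prop :=
  ((((Q : ℝ) ^ β : ℝ)) : EReal) <
    liminf (fun p : ℕ => ((quotSeq M (Q * p) / quotSeq M p : ℝ) : EReal)) atTop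

/-- Thilliez's growth index `γ(M) ∈ [0,∞]`. -/
def thilliezIdx (M : ℕ → ℝ) : ℝ≥0∞ :=
  ⨆ (β : ℝ) (_ : 0 ≤ β ∧ ∃ Q : ℕ, 2 ≤ Q ∧ condBQ M β Q), ENNReal.ofReal β

/-- The Beurling Gelfand-Shilov space `S_(σ)(ℝ)` (membership predicate). -/
def MemSBeurling (σ : ℝ → ℝ) (f : ℝ → ℂ) : Prop :=
  ContDiff ℝ (⊤ : ℕ∞) f ∧ ∀ ℓ : ℝ, 0 < ℓ → ∃ C : ℝ, ∀ x : ℝ, ∀ j k : ℕ,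
    (1 + |x|) ^ k * ‖iteratedDeriv j f x‖ ≤ C * assocSeq σ ℓ (j + k)

/-- The polynomial `ψ(x) = x² + 1/4`. -/
def psiMap (x : ℝ) : ℝ := x ^ 2 + 1 / 4

/-- The resolvent operator `R_μ = ∑_m C_{ψ_m}/μ^{m+1}`. -/
def Rres (μ : ℂ) (f : ℝ → ℂ) (x : ℝ) : ℂ :=
  ∑' m : ℕ, (μ ^ (m + 1))⁻¹ * f (psiMap^[m] x)

section AuxW0

variable {ω : ℝ → ℝ}

lemma W0_nonneg (hω : IsW0 ω) (t : ℝ) : 0 ≤ ω t := hω.1.1 t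

lemma W0_one (hω : IsW0 ω) : ω 1 = 0 := hω.2.2.1 1 ⟨zero_le_one, le_refl 1⟩

lemma phi_mono (hω : IsW0 ω) {y z : ℝ} (h : y ≤ z) :
    ω (Real.exp y) ≤ ω (Real.exp z) :=
  hω.1.2.1 (Real.exp_pos y).le (Real.exp_pos z).le (Real.exp_le_exp.2 h)

lemma phiStar_set_nonempty (hω : IsW0 ω) (x : ℝ) :
    Set.Nonempty {z : ℝ | ∃ y : ℝ, 0 ≤ y ∧ z = x * y - ω (Real.exp y)} :=
  ⟨x * 0 - ω (Real.exp 0), 0, le_refl 0, rfl⟩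

lemma log_growth (hω : IsW0 ω) {c : ℝ} (hc : 0 < c) :
    ∃ T : ℝ, 1 ≤ T ∧ ∀ t : ℝ, T ≤ t → Real.log t ≤ c * ω t := by
  have h := (hω.2.2.2.1).def hc
  rw [eventually_atTop] at h
  obtain ⟨T₀, hT₀⟩ := h
  refine ⟨max T₀ 1, le_max_right _ _, fun t ht => ?_⟩
  have h1 := hT₀ t (le_trans (le_max_left _ _) ht)
  have h2 : ‖Real.log t‖ ≤ c * ‖ω t‖ := h1
  rw [Real.norm_eq_abs, Real.norm_eq_abs, abs_of_nonneg (W0_nonneg hω t)] at h2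
  exact le_trans (le_abs_self _) h2

lemma phiStar_bddAbove (hω : IsW0 ω) (x : ℝ) :
    BddAbove {z : ℝ | ∃ y : ℝ, 0 ≤ y ∧ z = x * y - ω (Real.exp y)} := by
  obtain ⟨T, hT1, hT⟩ := log_growth hω (show (0:ℝ) < 1/(|x|+1) by positivity)
  refine ⟨|x| * max (Real.log T) 0, ?_⟩
  rintro z ⟨y, hy, rfl⟩
  rcases le_or_gt T (Real.exp y) with hcase | hcase
  · have h1 := hT _ hcase
    rw [Real.log_exp] at h1
    have h2 : (|x|+1) * y ≤ ω (Real.exp y) := by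
      rw [div_mul_eq_mul_div, le_div_iff₀ (by positivity)] at h1
      linarith [h1]
    have h3 : x * y ≤ |x| * y := mul_le_mul_of_nonneg_right (le_abs_self x) hy
    nlinarith [mul_nonneg (abs_nonneg x) (le_max_right (Real.log T) 0)]
  · have hy' : y ≤ max (Real.log T) 0 := by
      rcases le_or_gt y (Real.log T) with h | h
      · exact le_trans h (le_max_left _ _)
      · exfalso
        have : T < Real.exp y := by
          calc T = Real.exp (Real.log T) := (Real.exp_log (by linarith)).symm
          _ < Real.exp y := Real.exp_lt_exp.2 h
        linarith
    have h3 : x * y ≤ |x| * max (Real.log T) 0 :=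
      le_trans (mul_le_mul_of_nonneg_right (le_abs_self x) hy)
        (mul_le_mul_of_nonneg_left hy' (abs_nonneg x))
    linarith [W0_nonneg hω (Real.exp y)]

lemma phiStar_ge (hω : IsW0 ω) (x y : ℝ) (hy : 0 ≤ y) :
    x * y - ω (Real.exp y) ≤ phiStar ω x :=
  le_csSup (phiStar_bddAbove hω x) ⟨y, hy, rfl⟩

lemma phiStar_le (hω : IsW0 ω) {x c : ℝ}
    (h : ∀ y : ℝ, 0 ≤ y → x * y - ω (Real.exp y) ≤ c) : phiStar ω x ≤ c := by
  refine csSup_le (phiStar_set_nonempty hω x) ?_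
  rintro z ⟨y, hy, rfl⟩
  exact h y hy

lemma phiStar_nonneg (hω : IsW0 ω) (x : ℝ) : 0 ≤ phiStar ω x := by
  have h := phiStar_ge hω x 0 le_rfl
  rw [Real.exp_zero, W0_one hω] at h
  linarith

lemma phiStar_zero (hω : IsW0 ω) : phiStar ω 0 = 0 := by
  refine le_antisymm (phiStar_le hω fun y hy => ?_) (phiStar_nonneg hω 0)
  have := W0_nonneg hω (Real.exp y); linarith

lemma phiStar_mono (hω : IsW0 ω) {x₁ x₂ : ℝ} (h : x₁ ≤ x₂) :
    phiStar ω x₁ ≤ phiStar ω x₂ := by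
  refine phiStar_le hω fun y hy => le_trans ?_ (phiStar_ge hω x₂ y hy)
  nlinarith

lemma phiStar_midconvex (hω : IsW0 ω) (x d : ℝ) (hd : 0 ≤ d) :
    2 * phiStar ω (x + d) ≤ phiStar ω x + phiStar ω (x + 2*d) := by
  have h : phiStar ω (x + d) ≤ (phiStar ω x + phiStar ω (x + 2*d)) / 2 := by
    refine phiStar_le hω fun y hy => ?_
    have h1 := phiStar_ge hω x y hy
    have h2 := phiStar_ge hω (x + 2*d) y hy
    nlinarith
  linarith

end AuxW0
/-- Logarithm of the associated sequence. -/
def aseq (ω : ℝ → ℝ) (ℓ : ℝ) (p : ℕ) : ℝ := (1 / ℓ) * phiStar ω (ℓ * (p : ℝ))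

section AseqLemmas

variable {ω : ℝ → ℝ} {ℓ : ℝ}

lemma assocSeq_eq_exp (ω : ℝ → ℝ) (ℓ : ℝ) (p : ℕ) :
    assocSeq ω ℓ p = Real.exp (aseq ω ℓ p) := rfl

lemma aseq_zero (hω : IsW0 ω) (hℓ : 0 < ℓ) : aseq ω ℓ 0 = 0 := by
  simp [aseq, phiStar_zero hω]

lemma aseq_nonneg (hω : IsW0 ω) (hℓ : 0 < ℓ) (p : ℕ) : 0 ≤ aseq ω ℓ p :=
  mul_nonneg (by positivity) (phiStar_nonneg hω _)

lemma aseq_mono (hω : IsW0 ω) (hℓ : 0 < ℓ) {p q : ℕ} (h : p ≤ q) :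
    aseq ω ℓ p ≤ aseq ω ℓ q := by
  refine mul_le_mul_of_nonneg_left (phiStar_mono hω ?_) (by positivity)
  have : (p : ℝ) ≤ (q : ℝ) := Nat.cast_le.2 h
  nlinarith

lemma aseq_lb (hω : IsW0 ω) (hℓ : 0 < ℓ) {y : ℝ} (hy : 0 ≤ y) (p : ℕ) :
    (p : ℝ) * y - ω (Real.exp y) / ℓ ≤ aseq ω ℓ p := by
  have h := phiStar_ge hω (ℓ * p) y hy
  have h2 : (1/ℓ) * (ℓ * p * y - ω (Real.exp y)) ≤ (1/ℓ) * phiStar ω (ℓ * p) :=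
    mul_le_mul_of_nonneg_left h (by positivity)
  have h3 : (1/ℓ) * (ℓ * p * y - ω (Real.exp y)) = (p:ℝ) * y - ω (Real.exp y) / ℓ := by
    field_simp
  rw [h3] at h2; exact h2

/-- The increments of `aseq` are nondecreasing (discrete convexity). -/
lemma aseq_delta_mono (hω : IsW0 ω) (hℓ : 0 < ℓ) {p q : ℕ} (h : p ≤ q) :
    aseq ω ℓ (p+1) - aseq ω ℓ p ≤ aseq ω ℓ (q+1) - aseq ω ℓ q := by
  have step : ∀ r : ℕ, aseq ω ℓ (r+1) - aseq ω ℓ r ≤ aseq ω ℓ (r+2) - aseq ω ℓ (r+1) := by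
    intro r
    have hmc := phiStar_midconvex hω (ℓ * r) ℓ hℓ.le
    have e1 : ℓ * (r : ℝ) + ℓ = ℓ * ((r : ℕ) + 1 : ℕ) := by push_cast; ring
    have e2 : ℓ * (r : ℝ) + 2 * ℓ = ℓ * ((r : ℕ) + 2 : ℕ) := by push_cast; ring
    rw [e1, e2] at hmc
    simp only [aseq]
    have hpos : (0:ℝ) ≤ 1/ℓ := by positivity
    nlinarith [hmc]
  have : Monotone (fun r : ℕ => aseq ω ℓ (r+1) - aseq ω ℓ r) :=
    monotone_nat_of_le_succ step
  exact this h

end AseqLemmas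

section SupMachinery

/-- If a linear-minus-sequence function is dominated by `C - p`, it has an argmax. -/
lemma exists_argmax (c : ℕ → ℝ) (x C : ℝ) (h : ∀ p : ℕ, (p:ℝ) * x - c p ≤ C - p) :
    ∃ m : ℕ, ∀ p : ℕ, (p:ℝ) * x - c p ≤ (m:ℝ) * x - c m := by
  set F : ℕ → ℝ := fun p => (p:ℝ) * x - c p with hF
  set N : ℕ := Nat.ceil (C - F 0) with hN
  obtain ⟨m, hm_mem, hm⟩ := Finset.exists_max_image (Finset.range (N+1)) F
    ⟨0, Finset.mem_range.2 (Nat.succ_pos N)⟩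
  refine ⟨m, fun p => ?_⟩
  rcases le_or_gt p N with hp | hp
  · exact hm p (Finset.mem_range.2 (Nat.lt_succ_of_le hp))
  · have h1 : F p ≤ C - p := h p
    have h2 : C - F 0 ≤ (N : ℝ) := Nat.le_ceil _ |>.trans (by rw [hN])
    have h3 : (N : ℝ) + 1 ≤ (p : ℝ) := by exact_mod_cast hp
    have h4 : F p ≤ F 0 := by linarith
    exact h4.trans (hm 0 (Finset.mem_range.2 (Nat.succ_pos N)))

/-- Characterization of the `sSup` when an argmax is known. -/
lemma sup_eq_argmax (c : ℕ → ℝ) (x : ℝ) (m : ℕ)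
    (h : ∀ p : ℕ, (p:ℝ) * x - c p ≤ (m:ℝ) * x - c m) :
    sSup {z : ℝ | ∃ p : ℕ, z = (p:ℝ) * x - c p} = (m:ℝ) * x - c m := by
  have hbdd : BddAbove {z : ℝ | ∃ p : ℕ, z = (p:ℝ) * x - c p} := by
    refine ⟨(m:ℝ) * x - c m, ?_⟩
    rintro z ⟨p, rfl⟩; exact h p
  refine le_antisymm (csSup_le ⟨((0:ℕ):ℝ) * x - c 0, ⟨0, rfl⟩⟩ ?_) (le_csSup hbdd ⟨m, rfl⟩)
  rintro z ⟨p, rfl⟩; exact h p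

lemma chain_upper (a : ℕ → ℝ)
    (hmono : ∀ p q : ℕ, p ≤ q → a (p+1) - a p ≤ a (q+1) - a q)
    (m : ℕ) (u : ℝ) (hu : u ≤ a (m+1) - a m) :
    ∀ k : ℕ, a m + k * u ≤ a (m + k) := by
  intro k
  induction k with
  | zero => simp
  | succ k ih =>
    have h1 : u ≤ a (m+k+1) - a (m+k) := hu.trans (hmono m (m+k) (Nat.le_add_right m k))
    have : a m + ((k:ℕ)+1 : ℕ) * u = (a m + k * u) + u := by push_cast; ring
    rw [this]
    have : m + (k+1) = (m + k) + 1 := by ring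
    rw [this]
    linarith

lemma chain_lower (a : ℕ → ℝ)
    (hmono : ∀ p q : ℕ, p ≤ q → a (p+1) - a p ≤ a (q+1) - a q)
    (qq : ℕ) (u : ℝ) (hu : a (qq+1) - a qq ≤ u) :
    ∀ k p : ℕ, p + k = qq + 1 → a (qq+1) ≤ a p + k * u := by
  intro k
  induction k with
  | zero => intro p hp; simp [← hp]
  | succ k ih =>
    intro p hp
    have hpk : (p+1) + k = qq + 1 := by omega
    have hpq : p ≤ qq := by omega
    have h1 : a (p+1) - a p ≤ u := (hmono p qq hpq).trans hu
    have h2 := ih (p+1) hpk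
    have : ((k:ℕ)+1 : ℕ) * u = k * u + u := by push_cast; ring
    rw [this]
    linarith

/-- Main claim: if `u` lies between adjacent slopes at `m`, then `m` is the argmax. -/
lemma claim_of (a : ℕ → ℝ)
    (hmono : ∀ p q : ℕ, p ≤ q → a (p+1) - a p ≤ a (q+1) - a q)
    (m : ℕ) (u : ℝ) (hup : u ≤ a (m+1) - a m)
    (hdown : ∀ q : ℕ, m = q + 1 → a (q+1) - a q ≤ u) :
    ∀ p : ℕ, (p:ℝ) * u - a p ≤ (m:ℝ) * u - a m := by
  intro p
  rcases le_or_gt m p with hmp | hpm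
  · obtain ⟨k, rfl⟩ := Nat.exists_eq_add_of_le hmp
    have h := chain_upper a hmono m u hup k
    push_cast
    linarith
  · rcases Nat.exists_eq_add_of_lt (Nat.zero_lt_of_lt hpm) with ⟨q, hq⟩
    have hq' : m = q + 1 := by omega
    have hk : p + (m - p) = q + 1 := by omega
    have h := chain_lower a hmono q u (hdown q hq') (m - p) p hk
    rw [← hq'] at h
    have hcast : ((m - p : ℕ) : ℝ) = (m : ℝ) - (p : ℝ) := by
      have : p ≤ m := hpm.le
      push_cast [Nat.cast_sub this]; ring
    rw [hcast] at h
    linarith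

end SupMachinery
section OmegaSeqLemmas

/-- Rewriting `omegaSeq` at a positive point for exponential sequences. -/
lemma omegaSeq_pos_eq (M c : ℕ → ℝ) (hM : ∀ p, M p = Real.exp (c p))
    {t : ℝ} (ht : 0 < t) :
    omegaSeq M t = sSup {z : ℝ | ∃ p : ℕ, z = (p:ℝ) * Real.log t - c p} := by
  have hlog : ∀ p : ℕ, Real.log (t ^ p / M p) = (p:ℝ) * Real.log t - c p := by
    intro p
    rw [hM, Real.log_div (pow_ne_zero _ ht.ne') (Real.exp_ne_zero _),
      Real.log_pow, Real.log_exp]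
  unfold omegaSeq
  congr 1
  ext z
  constructor
  · rintro ⟨p, rfl⟩; exact ⟨p, hlog p⟩
  · rintro ⟨p, rfl⟩; exact ⟨p, (hlog p).symm⟩

/-- `omegaSeq M 0 = 0` for a sequence with `M 0 = 1` and positive values. -/
lemma omegaSeq_at_zero (M c : ℕ → ℝ) (hM : ∀ p, M p = Real.exp (c p))
    (hc0 : c 0 = 0) : omegaSeq M 0 = 0 := by
  have hset : {z : ℝ | ∃ p : ℕ, z = Real.log ((0:ℝ) ^ p / M p)} = {0} := by
    ext z
    simp only [Set.mem_setOf_eq, Set.mem_singleton_iff]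
    constructor
    · rintro ⟨p, rfl⟩
      cases p with
      | zero => simp [hM 0, hc0, Real.exp_zero]
      | succ n => simp [zero_pow (Nat.succ_ne_zero n)]
    · rintro rfl
      exact ⟨0, by simp [hM 0, hc0, Real.exp_zero]⟩
  unfold omegaSeq
  rw [hset, csSup_singleton]

variable {ω : ℝ → ℝ} {ℓ : ℝ}

/-- Growth bound for the single sequence. -/
lemma aseq_grow (hω : IsW0 ω) (hℓ : 0 < ℓ) (x : ℝ) :
    ∀ p : ℕ, (p:ℝ) * x - aseq ω ℓ p ≤ ω (Real.exp (max x 0 + 1)) / ℓ - p := by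
  intro p
  have hy : (0:ℝ) ≤ max x 0 + 1 := by positivity
  have h1 := aseq_lb hω hℓ hy p
  have h2 : (p:ℝ) * x ≤ (p:ℝ) * (max x 0 + 1) - p := by
    have hx : x ≤ max x 0 := le_max_left x 0
    have hp : (0:ℝ) ≤ (p:ℝ) := Nat.cast_nonneg p
    nlinarith
  linarith

lemma single_bddAbove (hω : IsW0 ω) (hℓ : 0 < ℓ) (x : ℝ) :
    BddAbove {z : ℝ | ∃ p : ℕ, z = (p:ℝ) * x - aseq ω ℓ p} := by
  refine ⟨ω (Real.exp (max x 0 + 1)) / ℓ, ?_⟩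
  rintro z ⟨p, rfl⟩
  have := aseq_grow hω hℓ x p
  have : (0:ℝ) ≤ p := Nat.cast_nonneg p
  linarith [aseq_grow hω hℓ x p]

/-- An element bound: every `p log s - a p` is at most `omegaSeq`. -/
lemma omega_ge_elem (hω : IsW0 ω) (hℓ : 0 < ℓ) {s : ℝ} (hs : 0 < s) (p : ℕ) :
    (p:ℝ) * Real.log s - aseq ω ℓ p ≤ omegaSeq (assocSeq ω ℓ) s := by
  rw [omegaSeq_pos_eq (assocSeq ω ℓ) (aseq ω ℓ) (assocSeq_eq_exp ω ℓ) hs]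
  exact le_csSup (single_bddAbove hω hℓ _) ⟨p, rfl⟩

lemma omega_nonneg (hω : IsW0 ω) (hℓ : 0 < ℓ) {s : ℝ} (hs : 0 < s) :
    0 ≤ omegaSeq (assocSeq ω ℓ) s := by
  have h := omega_ge_elem hω hℓ hs 0
  rw [aseq_zero hω hℓ] at h
  simpa using h

/-- Upper bound `ω_{W^{(ℓ)}} ≤ (1/ℓ) ω` on `(0,∞)`. -/
lemma omega_le_w (hω : IsW0 ω) (hℓ : 0 < ℓ) {s : ℝ} (hs : 0 < s) :
    omegaSeq (assocSeq ω ℓ) s ≤ (1/ℓ) * ω s := by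
  rw [omegaSeq_pos_eq (assocSeq ω ℓ) (aseq ω ℓ) (assocSeq_eq_exp ω ℓ) hs]
  refine csSup_le ⟨((0:ℕ):ℝ) * Real.log s - aseq ω ℓ 0, ⟨0, rfl⟩⟩ ?_
  rintro z ⟨p, rfl⟩
  rcases le_or_gt s 1 with hs1 | hs1
  · have hlog : Real.log s ≤ 0 := Real.log_nonpos hs.le hs1
    have h1 : (p:ℝ) * Real.log s ≤ 0 :=
      mul_nonpos_of_nonneg_of_nonpos (Nat.cast_nonneg p) hlog
    have h2 := aseq_nonneg hω hℓ p
    have h3 : 0 ≤ (1/ℓ) * ω s := mul_nonneg (by positivity) (W0_nonneg hω s)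
    linarith
  · have hls : 0 ≤ Real.log s := Real.log_nonneg hs1.le
    have h := phiStar_ge hω (ℓ * p) (Real.log s) hls
    rw [Real.exp_log hs] at h
    have h2 : (1/ℓ) * (ℓ * p * Real.log s - ω s) ≤ (1/ℓ) * phiStar ω (ℓ * p) :=
      mul_le_mul_of_nonneg_left h (by positivity)
    have h3 : (1/ℓ) * (ℓ * p * Real.log s - ω s) =
        (p:ℝ) * Real.log s - (1/ℓ) * ω s := by field_simp
    rw [h3] at h2
    simp only [aseq]
    linarith

end OmegaSeqLemmas
section CoreLemma

variable {σ τ : ℝ → ℝ} {ℓ ℓ₁ : ℝ}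

/-- Growth bound for the pair sequence. -/
lemma pair_grow (hσ : IsW0 σ) (hτ : IsW0 τ) (hℓ : 0 < ℓ) (hℓ₁ : 0 < ℓ₁) (x : ℝ) :
    ∀ p : ℕ, (p:ℝ) * x - (aseq σ ℓ p + aseq τ ℓ₁ p) ≤
      σ (Real.exp (max x 0 + 1)) / ℓ - p := by
  intro p
  have h1 := aseq_grow hσ hℓ x p
  have h2 := aseq_nonneg hτ hℓ₁ p
  linarith

lemma pair_bddAbove (hσ : IsW0 σ) (hτ : IsW0 τ) (hℓ : 0 < ℓ) (hℓ₁ : 0 < ℓ₁) (x : ℝ) :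
    BddAbove {z : ℝ | ∃ p : ℕ, z = (p:ℝ) * x - (aseq σ ℓ p + aseq τ ℓ₁ p)} := by
  refine ⟨σ (Real.exp (max x 0 + 1)) / ℓ, ?_⟩
  rintro z ⟨p, rfl⟩
  have := pair_grow hσ hτ hℓ hℓ₁ x p
  have hp : (0:ℝ) ≤ p := Nat.cast_nonneg p
  linarith

lemma pair_ge_elem (hσ : IsW0 σ) (hτ : IsW0 τ) (hℓ : 0 < ℓ) (hℓ₁ : 0 < ℓ₁)
    {t : ℝ} (ht : 0 < t) (p : ℕ) :
    (p:ℝ) * Real.log t - (aseq σ ℓ p + aseq τ ℓ₁ p) ≤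
      omegaSeq (fun q => assocSeq σ ℓ q * assocSeq τ ℓ₁ q) t := by
  rw [omegaSeq_pos_eq _ (fun q => aseq σ ℓ q + aseq τ ℓ₁ q)
    (fun q => by rw [assocSeq_eq_exp, assocSeq_eq_exp, Real.exp_add]) ht]
  exact le_csSup (pair_bddAbove hσ hτ hℓ hℓ₁ _) ⟨p, rfl⟩

/-- Core minimax lemma: there is an optimal splitting point `s`. -/
lemma core_split (hσ : IsW0 σ) (hτ : IsW0 τ) (hℓ : 0 < ℓ) (hℓ₁ : 0 < ℓ₁)
    {t : ℝ} (ht : 0 < t) :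
    ∃ s : ℝ, 0 < s ∧
      omegaSeq (assocSeq σ ℓ) s + omegaSeq (assocSeq τ ℓ₁) (t/s)
        = omegaSeq (fun q => assocSeq σ ℓ q * assocSeq τ ℓ₁ q) t ∧
      (1 ≤ t → 1 ≤ s ∧ s ≤ t) := by
  set x := Real.log t with hx
  set a := aseq σ ℓ with ha
  set b := aseq τ ℓ₁ with hb
  set c : ℕ → ℝ := fun p => a p + b p with hc
  -- argmax of the pair
  obtain ⟨m, hm⟩ := exists_argmax c x (σ (Real.exp (max x 0 + 1)) / ℓ)
    (pair_grow hσ hτ hℓ hℓ₁ x)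
  have hamono := fun p q h => aseq_delta_mono hσ hℓ (p := p) (q := q) h
  have hbmono := fun p q h => aseq_delta_mono hτ hℓ₁ (p := p) (q := q) h
  -- optimality conditions
  have hup : x ≤ (a (m+1) - a m) + (b (m+1) - b m) := by
    have h := hm (m+1)
    push_cast at h
    simp only [hc] at h ⊢
    linarith
  have hbd0 : 0 ≤ b (m+1) - b m := by
    have := aseq_mono hτ hℓ₁ (Nat.le_succ m); simp only [hb]; linarith
  have had0 : 0 ≤ a (m+1) - a m := by
    have := aseq_mono hσ hℓ (Nat.le_succ m); simp only [ha]; linarith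
  -- construct u
  obtain ⟨u, huS, huS', huT, huT', hux⟩ :
      ∃ u : ℝ, u ≤ a (m+1) - a m ∧ (∀ q : ℕ, m = q + 1 → a (q+1) - a q ≤ u) ∧
        x - u ≤ b (m+1) - b m ∧ (∀ q : ℕ, m = q + 1 → b (q+1) - b q ≤ x - u) ∧
        (0 ≤ x → 0 ≤ u ∧ u ≤ x) := by
    cases m with
    | zero =>
      refine ⟨min (a 1 - a 0) x, min_le_left _ _, fun q hq => by omega, ?_,
        fun q hq => by omega, fun hx0 => ⟨le_min had0 hx0, min_le_right _ _⟩⟩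
      rcases min_cases (a 1 - a 0) x with ⟨hmin, hle⟩ | ⟨hmin, hle⟩
      · rw [hmin]; linarith [hup]
      · rw [hmin]; linarith
    | succ q =>
      have hdownopt : (a (q+1) - a q) + (b (q+1) - b q) ≤ x := by
        have h := hm q
        push_cast at h
        simp only [hc] at h
        linarith
      have haq0 : 0 ≤ a (q+1) - a q := by
        have := aseq_mono hσ hℓ (Nat.le_succ q); simp only [ha]; linarith
      have hbq0 : 0 ≤ b (q+1) - b q := by
        have := aseq_mono hτ hℓ₁ (Nat.le_succ q); simp only [hb]; linarith
      have hamq : a (q+1) - a q ≤ a (q+2) - a (q+1) := hamono q (q+1) (Nat.le_succ q)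
      have hbmq : b (q+1) - b q ≤ b (q+2) - b (q+1) := hbmono q (q+1) (Nat.le_succ q)
      refine ⟨max (a (q+1) - a q) (x - (b (q+2) - b (q+1))), ?_, ?_, ?_, ?_, ?_⟩
      · exact max_le hamq (by linarith [hup])
      · intro q' hq'
        have : q' = q := by omega
        subst this; exact le_max_left _ _
      · have := le_max_right (a (q+1) - a q) (x - (b (q+2) - b (q+1)))
        have e : (q+1) + 1 = q + 2 := by ring
        rw [e]; linarith
      · intro q' hq'
        have : q' = q := by omega
        subst this
        refine le_sub_comm.1 ?_
        exact max_le (by linarith) (by linarith)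
      · intro hx0
        constructor
        · exact le_trans haq0 (le_max_left _ _)
        · exact max_le (by linarith) (by linarith)
  -- the claims
  have claimS : ∀ p : ℕ, (p:ℝ) * u - a p ≤ (m:ℝ) * u - a m :=
    claim_of a hamono m u huS huS'
  have claimT : ∀ p : ℕ, (p:ℝ) * (x - u) - b p ≤ (m:ℝ) * (x - u) - b m :=
    claim_of b hbmono m (x - u) huT huT'
  refine ⟨Real.exp u, Real.exp_pos u, ?_, ?_⟩
  · have hts : t / Real.exp u = Real.exp (x - u) := by
      rw [Real.exp_sub, hx, Real.exp_log ht]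
    have e1 : omegaSeq (assocSeq σ ℓ) (Real.exp u) = (m:ℝ) * u - a m := by
      rw [omegaSeq_pos_eq (assocSeq σ ℓ) a (assocSeq_eq_exp σ ℓ) (Real.exp_pos u),
        Real.log_exp]
      exact sup_eq_argmax a u m claimS
    have e2 : omegaSeq (assocSeq τ ℓ₁) (t / Real.exp u) = (m:ℝ) * (x - u) - b m := by
      rw [hts, omegaSeq_pos_eq (assocSeq τ ℓ₁) b (assocSeq_eq_exp τ ℓ₁)
        (Real.exp_pos _), Real.log_exp]
      exact sup_eq_argmax b (x - u) m claimT
    have e3 : omegaSeq (fun q => assocSeq σ ℓ q * assocSeq τ ℓ₁ q) t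
        = (m:ℝ) * x - c m := by
      rw [omegaSeq_pos_eq _ c
        (fun q => by rw [assocSeq_eq_exp, assocSeq_eq_exp, hc, Real.exp_add]) ht]
      exact sup_eq_argmax c x m hm
    rw [e1, e2, e3]
    simp only [hc]; ring
  · intro ht1
    have hx0 : 0 ≤ x := Real.log_nonneg ht1
    obtain ⟨h0u, hux'⟩ := hux hx0
    constructor
    · calc (1:ℝ) = Real.exp 0 := Real.exp_zero.symm
        _ ≤ Real.exp u := Real.exp_le_exp.2 h0u
    · calc Real.exp u ≤ Real.exp x := Real.exp_le_exp.2 hux'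
        _ = t := by rw [hx, Real.exp_log ht]

end CoreLemma
section PartA

variable {σ τ : ℝ → ℝ} {ℓ ℓ₁ : ℝ}

lemma omega_at_one {ω : ℝ → ℝ} (hω : IsW0 ω) (hℓ : 0 < ℓ) :
    omegaSeq (assocSeq ω ℓ) 1 = 0 := by
  rw [omegaSeq_pos_eq (assocSeq ω ℓ) (aseq ω ℓ) (assocSeq_eq_exp ω ℓ) one_pos,
    Real.log_one]
  have h : ∀ p : ℕ, (p:ℝ) * 0 - aseq ω ℓ p ≤ ((0:ℕ):ℝ) * 0 - aseq ω ℓ 0 := by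
    intro p
    have h1 := aseq_nonneg hω hℓ p
    rw [aseq_zero hω hℓ]
    simp; linarith
  rw [sup_eq_argmax (aseq ω ℓ) 0 0 h, aseq_zero hω hℓ]
  simp

lemma pair_le_sum (hσ : IsW0 σ) (hτ : IsW0 τ) (hℓ : 0 < ℓ) (hℓ₁ : 0 < ℓ₁)
    {t s : ℝ} (ht : 0 < t) (hs : 0 < s) :
    omegaSeq (fun q => assocSeq σ ℓ q * assocSeq τ ℓ₁ q) t ≤
      omegaSeq (assocSeq σ ℓ) s + omegaSeq (assocSeq τ ℓ₁) (t/s) := by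
  rw [omegaSeq_pos_eq _ (fun q => aseq σ ℓ q + aseq τ ℓ₁ q)
    (fun q => by rw [assocSeq_eq_exp, assocSeq_eq_exp, Real.exp_add]) ht]
  refine csSup_le ⟨((0:ℕ):ℝ) * Real.log t - (aseq σ ℓ 0 + aseq τ ℓ₁ 0), ⟨0, rfl⟩⟩ ?_
  rintro z ⟨p, rfl⟩
  have h1 := omega_ge_elem hσ hℓ hs p
  have h2 := omega_ge_elem hτ hℓ₁ (div_pos ht hs) p
  rw [Real.log_div ht.ne' hs.ne'] at h2
  linarith

lemma lowerConj_bddBelow_omega (hσ : IsW0 σ) (hτ : IsW0 τ) (hℓ : 0 < ℓ)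
    (hℓ₁ : 0 < ℓ₁) {t : ℝ} (ht : 0 ≤ t) :
    BddBelow {z : ℝ | ∃ s : ℝ, 0 < s ∧
      z = omegaSeq (assocSeq σ ℓ) s + omegaSeq (assocSeq τ ℓ₁) (t/s)} := by
  refine ⟨0, ?_⟩
  rintro z ⟨s, hs, rfl⟩
  rcases eq_or_lt_of_le ht with h0 | h0
  · have : t / s = 0 := by rw [← h0]; simp
    rw [this, omegaSeq_at_zero _ (aseq τ ℓ₁) (assocSeq_eq_exp τ ℓ₁)
      (aseq_zero hτ hℓ₁)]
    have := omega_nonneg hσ hℓ hs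
    linarith
  · have h1 := omega_nonneg hσ hℓ hs
    have h2 := omega_nonneg hτ hℓ₁ (div_pos h0 hs)
    linarith

/-- Part A: the pointwise identity. -/
lemma partA (hσ : IsW0 σ) (hτ : IsW0 τ) (hℓ : 0 < ℓ) (hℓ₁ : 0 < ℓ₁)
    {t : ℝ} (ht : 0 ≤ t) :
    omegaSeq (fun p => assocSeq σ ℓ p * assocSeq τ ℓ₁ p) t
      = lowerConj (omegaSeq (assocSeq σ ℓ)) (omegaSeq (assocSeq τ ℓ₁)) t := by
  rcases eq_or_lt_of_le ht with h0 | h0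
  · -- t = 0
    rw [← h0]
    rw [omegaSeq_at_zero _ (fun q => aseq σ ℓ q + aseq τ ℓ₁ q)
      (fun q => by rw [assocSeq_eq_exp, assocSeq_eq_exp, Real.exp_add])
      (by beta_reduce; rw [aseq_zero hσ hℓ, aseq_zero hτ hℓ₁]; ring)]
    unfold lowerConj
    refine le_antisymm (le_csInf ⟨_, ⟨1, one_pos, rfl⟩⟩ ?_) ?_
    · rintro z ⟨s, hs, rfl⟩
      have hz : (0:ℝ) / s = 0 := by simp
      rw [hz, omegaSeq_at_zero _ (aseq τ ℓ₁) (assocSeq_eq_exp τ ℓ₁)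
        (aseq_zero hτ hℓ₁)]
      have := omega_nonneg hσ hℓ hs
      linarith
    · refine csInf_le (lowerConj_bddBelow_omega hσ hτ hℓ hℓ₁ le_rfl) ⟨1, one_pos, ?_⟩
      have hz : (0:ℝ) / 1 = 0 := by simp
      rw [hz, omegaSeq_at_zero _ (aseq τ ℓ₁) (assocSeq_eq_exp τ ℓ₁)
        (aseq_zero hτ hℓ₁), omega_at_one hσ hℓ]
      ring
  · -- t > 0
    unfold lowerConj
    refine le_antisymm (le_csInf ⟨_, ⟨1, one_pos, rfl⟩⟩ ?_) ?_
    · rintro z ⟨s, hs, rfl⟩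
      exact pair_le_sum hσ hτ hℓ hℓ₁ h0 hs
    · obtain ⟨s, hs, heq, _⟩ := core_split hσ hτ hℓ hℓ₁ h0
      exact csInf_le (lowerConj_bddBelow_omega hσ hτ hℓ hℓ₁ ht) ⟨s, hs, heq.symm⟩

end PartA
section Subgrad

variable {ω : ℝ → ℝ} {ℓ : ℝ}

lemma subgrad (hω : IsW0 ω) {xb : ℝ} (hx : 0 ≤ xb) {ε : ℝ} (hε : 0 < ε) :
    ∃ u : ℝ, 0 ≤ u ∧ ω (Real.exp xb) - ε ≤ u * xb - phiStar ω u := by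
  set φ : ℝ → ℝ := fun y => ω (Real.exp y) with hφ
  have hφcont : Continuous φ :=
    hω.2.1.comp_continuous Real.continuous_exp (fun y => (Real.exp_pos y).le)
  obtain ⟨δ, hδ, hδ'⟩ := Metric.continuousAt_iff.1 hφcont.continuousAt ε hε
  set h : ℝ := δ / 2 with hh_def
  have hh : 0 < h := by positivity
  have hdist : dist (xb + h) xb < δ := by
    rw [Real.dist_eq]
    rw [show xb + h - xb = h by ring, abs_of_pos hh]
    rw [hh_def]; linarith
  have hφmono : ∀ {y z : ℝ}, y ≤ z → φ y ≤ φ z := fun hyz => phi_mono hω hyz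
  have hφh : φ (xb + h) - φ xb < ε := by
    have := hδ' hdist
    rw [Real.dist_eq] at this
    have h2 := le_abs_self (φ (xb + h) - φ xb)
    linarith [abs_lt.1 this]
  have hφh0 : 0 ≤ φ (xb + h) - φ xb := by
    have := hφmono (by linarith : xb ≤ xb + h); linarith
  set u : ℝ := (φ (xb + h) - φ xb) / h with hu_def
  have hu0 : 0 ≤ u := div_nonneg hφh0 hh.le
  have huh : u * h = φ (xb + h) - φ xb := by
    rw [hu_def]; field_simp
  have hconv := hω.2.2.2.2
  have key : ∀ y : ℝ, 0 ≤ y → u * y - φ y ≤ u * xb - φ xb + ε := by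
    intro y hy
    rcases le_or_gt y xb with hyx | hyx
    · -- y ≤ xb
      rcases eq_or_lt_of_le hyx with rfl | hyx'
      · linarith
      set d : ℝ := xb - y with hd_def
      have hd : 0 < d := by rw [hd_def]; linarith
      have hcv := hconv.2 (Set.mem_univ y) (Set.mem_univ (xb + h))
        (show (0:ℝ) ≤ h / (d + h) by positivity)
        (show (0:ℝ) ≤ d / (d + h) by positivity)
        (by field_simp; ring)
      simp only [smul_eq_mul] at hcv
      have harg : h / (d + h) * y + d / (d + h) * (xb + h) = xb := by
        rw [hd_def]; field_simp; ring
      rw [harg] at hcv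
      -- (d+h) φ(xb) ≤ h φ(y) + d φ(xb+h)
      have h1 : (d + h) * φ xb ≤ h * φ y + d * φ (xb + h) := by
        have hpos : (0:ℝ) < d + h := by linarith
        have := mul_le_mul_of_nonneg_left hcv hpos.le
        calc (d + h) * φ xb = (d + h) * φ xb := rfl
          _ ≤ (d + h) * (h / (d + h) * φ y + d / (d + h) * φ (xb + h)) := this
          _ = h * φ y + d * φ (xb + h) := by field_simp
      have h2 : φ xb ≤ φ y + u * d := by
        have h3 : φ (xb + h) = φ xb + u * h := by linarith [huh]
        rw [h3] at h1
        have h4 : h * φ xb ≤ h * φ y + d * (u * h) := by nlinarith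
        nlinarith
      nlinarith
    · rcases le_or_gt (xb + h) y with hyx2 | hyx2
      · -- y ≥ xb + h
        set θ : ℝ := h / (y - xb) with hθ_def
        have hyxb : 0 < y - xb := by linarith
        have hθ0 : 0 ≤ θ := by positivity
        have hθ1 : θ ≤ 1 := by
          rw [hθ_def, div_le_one hyxb]; linarith
        have hcv := hconv.2 (Set.mem_univ xb) (Set.mem_univ y)
          (show (0:ℝ) ≤ 1 - θ by linarith) hθ0 (by ring)
        simp only [smul_eq_mul] at hcv
        have harg : (1 - θ) * xb + θ * y = xb + h := by
          rw [hθ_def]; field_simp; ring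
        rw [harg] at hcv
        -- u h ≤ θ (φ y − φ xb)
        have h1 : u * h ≤ θ * (φ y - φ xb) := by nlinarith [huh]
        have h2 : u * (y - xb) ≤ φ y - φ xb := by
          have := mul_le_mul_of_nonneg_left h1 (le_of_lt hyxb)
          rw [hθ_def] at this
          have he : (y - xb) * (h / (y - xb) * (φ y - φ xb))
              = h * (φ y - φ xb) := by field_simp
          rw [he] at this
          nlinarith
        nlinarith
      · -- xb < y < xb + h
        have h1 : φ xb ≤ φ y := hφmono hyx.le
        have h2 : u * (y - xb) ≤ u * h := by nlinarith
        nlinarith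
  have hps : phiStar ω u ≤ u * xb - φ xb + ε := phiStar_le hω key
  exact ⟨u, hu0, by simp only [hφ] at hps ⊢; linarith⟩

/-- Lower bound `(1/ℓ) ω − log ≤ ω_{W^{(ℓ)}}` on `[1,∞)`. -/
lemma omega_lb_w (hω : IsW0 ω) (hℓ : 0 < ℓ) {t : ℝ} (ht1 : 1 ≤ t) :
    (1/ℓ) * ω t - Real.log t ≤ omegaSeq (assocSeq ω ℓ) t := by
  have ht : (0:ℝ) < t := lt_of_lt_of_le one_pos ht1
  have hlt : 0 ≤ Real.log t := Real.log_nonneg ht1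
  refine le_of_forall_pos_le_add ?_
  intro ε hε
  obtain ⟨u, hu0, hkey⟩ := subgrad hω hlt (show (0:ℝ) < ε * ℓ by positivity)
  rw [Real.exp_log ht] at hkey
  set p : ℕ := Nat.floor (u / ℓ) with hp_def
  have hul : 0 ≤ u / ℓ := by positivity
  have hp1 : ℓ * p ≤ u := by
    have h := Nat.floor_le hul
    calc ℓ * p ≤ ℓ * (u / ℓ) := mul_le_mul_of_nonneg_left h hℓ.le
      _ = u := by field_simp
  have hp2 : u / ℓ < (p:ℝ) + 1 := Nat.lt_floor_add_one _
  have helem := omega_ge_elem hω hℓ ht p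
  have hmono : phiStar ω (ℓ * p) ≤ phiStar ω u := phiStar_mono hω hp1
  have h4 : (u / ℓ - 1) * Real.log t ≤ (p:ℝ) * Real.log t :=
    mul_le_mul_of_nonneg_right (by linarith) hlt
  have h5 : aseq ω ℓ p ≤ (1/ℓ) * phiStar ω u := by
    simp only [aseq]
    exact mul_le_mul_of_nonneg_left hmono (by positivity)
  have h6 : (1/ℓ) * (ω t - ε * ℓ) ≤ (1/ℓ) * (u * Real.log t - phiStar ω u) :=
    mul_le_mul_of_nonneg_left (by linarith) (by positivity)
  have h7 : (1/ℓ) * (u * Real.log t - phiStar ω u)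
      = (u / ℓ - 1) * Real.log t - (1/ℓ) * phiStar ω u + Real.log t := by
    field_simp; ring
  have h8 : (1/ℓ) * (ω t - ε * ℓ) = (1/ℓ) * ω t - ε := by
    field_simp
  rw [h7, h8] at h6
  linarith

end Subgrad
section PartB

variable {σ τ : ℝ → ℝ} {ℓ ℓ₁ : ℝ}

lemma lowerConj_nonneg (hσ : IsW0 σ) (hτ : IsW0 τ) (t : ℝ) :
    0 ≤ lowerConj σ τ t := by
  refine le_csInf ⟨_, ⟨1, one_pos, rfl⟩⟩ ?_
  rintro z ⟨s, hs, rfl⟩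
  exact add_nonneg (W0_nonneg hσ s) (W0_nonneg hτ _)

lemma lowerConj_bddBelow (hσ : IsW0 σ) (hτ : IsW0 τ) (t : ℝ) :
    BddBelow {z : ℝ | ∃ s : ℝ, 0 < s ∧ z = σ s + τ (t/s)} := by
  refine ⟨0, ?_⟩
  rintro z ⟨s, hs, rfl⟩
  exact add_nonneg (W0_nonneg hσ s) (W0_nonneg hτ _)

lemma pairOmega_nonneg (hσ : IsW0 σ) (hτ : IsW0 τ) (hℓ : 0 < ℓ) (hℓ₁ : 0 < ℓ₁)
    {t : ℝ} (ht : 0 < t) :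
    0 ≤ omegaSeq (fun q => assocSeq σ ℓ q * assocSeq τ ℓ₁ q) t := by
  have h := pair_ge_elem hσ hτ hℓ hℓ₁ ht 0
  rw [aseq_zero hσ hℓ, aseq_zero hτ hℓ₁] at h
  simpa using h

lemma pairOmega_ge_log (hσ : IsW0 σ) (hτ : IsW0 τ) (hℓ : 0 < ℓ) (hℓ₁ : 0 < ℓ₁)
    {t : ℝ} (ht : 0 < t) :
    Real.log t - (aseq σ ℓ 1 + aseq τ ℓ₁ 1) ≤
      omegaSeq (fun q => assocSeq σ ℓ q * assocSeq τ ℓ₁ q) t := by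
  have h := pair_ge_elem hσ hτ hℓ hℓ₁ ht 1
  push_cast at h
  linarith

lemma partB1 (hσ : IsW0 σ) (hτ : IsW0 τ) (hℓ : 0 < ℓ) (hℓ₁ : 0 < ℓ₁)
    {t : ℝ} (ht : 0 < t) :
    omegaSeq (fun q => assocSeq σ ℓ q * assocSeq τ ℓ₁ q) t ≤
      max (1/ℓ) (1/ℓ₁) * lowerConj σ τ t := by
  set cmax : ℝ := max (1/ℓ) (1/ℓ₁) with hcmax
  have hcm : 0 < cmax := lt_max_of_lt_left (by positivity)
  set Ω := omegaSeq (fun q => assocSeq σ ℓ q * assocSeq τ ℓ₁ q) t with hΩ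
  have key : Ω / cmax ≤ lowerConj σ τ t := by
    refine le_csInf ⟨_, ⟨1, one_pos, rfl⟩⟩ ?_
    rintro z ⟨s, hs, rfl⟩
    have h1 : omegaSeq (assocSeq σ ℓ) s ≤ cmax * σ s := by
      refine le_trans (omega_le_w hσ hℓ hs) ?_
      exact mul_le_mul_of_nonneg_right (le_max_left _ _) (W0_nonneg hσ s)
    have h2 : omegaSeq (assocSeq τ ℓ₁) (t/s) ≤ cmax * τ (t/s) := by
      refine le_trans (omega_le_w hτ hℓ₁ (div_pos ht hs)) ?_
      exact mul_le_mul_of_nonneg_right (le_max_right _ _) (W0_nonneg hτ _)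
    have h3 := pair_le_sum hσ hτ hℓ hℓ₁ ht hs
    rw [div_le_iff₀ hcm]
    calc Ω ≤ cmax * σ s + cmax * τ (t/s) := by rw [hΩ]; linarith
      _ = (σ s + τ (t/s)) * cmax := by ring
  rw [div_le_iff₀ hcm] at key
  calc Ω ≤ lowerConj σ τ t * cmax := key
    _ = cmax * lowerConj σ τ t := by ring

lemma partB2 (hσ : IsW0 σ) (hτ : IsW0 τ) (hℓ : 0 < ℓ) (hℓ₁ : 0 < ℓ₁)
    {t : ℝ} (ht1 : 1 ≤ t) :
    lowerConj σ τ t ≤ max ℓ ℓ₁ *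
      (omegaSeq (fun q => assocSeq σ ℓ q * assocSeq τ ℓ₁ q) t + Real.log t) := by
  have ht : (0:ℝ) < t := lt_of_lt_of_le one_pos ht1
  set cM : ℝ := max ℓ ℓ₁ with hcM
  have hcM0 : 0 < cM := lt_max_of_lt_left hℓ
  obtain ⟨s, hs, heq, hbnd⟩ := core_split hσ hτ hℓ hℓ₁ ht
  obtain ⟨hs1, hst⟩ := hbnd ht1
  have hts1 : 1 ≤ t / s := (one_le_div hs).2 hst
  have hL : lowerConj σ τ t ≤ σ s + τ (t/s) :=
    csInf_le (lowerConj_bddBelow hσ hτ t) ⟨s, hs, rfl⟩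
  have hωS0 : 0 ≤ omegaSeq (assocSeq σ ℓ) s := omega_nonneg hσ hℓ hs
  have hωT0 : 0 ≤ omegaSeq (assocSeq τ ℓ₁) (t/s) :=
    omega_nonneg hτ hℓ₁ (div_pos ht hs)
  have hlogs : 0 ≤ Real.log s := Real.log_nonneg hs1
  have hlogts : 0 ≤ Real.log (t/s) := Real.log_nonneg hts1
  have h1 : σ s ≤ cM * (omegaSeq (assocSeq σ ℓ) s + Real.log s) := by
    have h := omega_lb_w hσ hℓ hs1
    have h' : σ s ≤ ℓ * (omegaSeq (assocSeq σ ℓ) s + Real.log s) := by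
      have := mul_le_mul_of_nonneg_left h hℓ.le
      have he : ℓ * ((1/ℓ) * σ s - Real.log s)
          = σ s - ℓ * Real.log s := by field_simp
      rw [he] at this
      nlinarith
    refine h'.trans (mul_le_mul_of_nonneg_right (le_max_left _ _) (by linarith))
  have h2 : τ (t/s) ≤ cM * (omegaSeq (assocSeq τ ℓ₁) (t/s) + Real.log (t/s)) := by
    have h := omega_lb_w hτ hℓ₁ hts1
    have h' : τ (t/s) ≤ ℓ₁ * (omegaSeq (assocSeq τ ℓ₁) (t/s) + Real.log (t/s)) := by
      have := mul_le_mul_of_nonneg_left h hℓ₁.le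
      have he : ℓ₁ * ((1/ℓ₁) * τ (t/s) - Real.log (t/s))
          = τ (t/s) - ℓ₁ * Real.log (t/s) := by field_simp
      rw [he] at this
      nlinarith
    refine h'.trans (mul_le_mul_of_nonneg_right (le_max_right _ _) (by linarith))
  have hlogsum : Real.log s + Real.log (t/s) = Real.log t := by
    rw [Real.log_div ht.ne' hs.ne']; ring
  calc lowerConj σ τ t ≤ σ s + τ (t/s) := hL
    _ ≤ cM * (omegaSeq (assocSeq σ ℓ) s + omegaSeq (assocSeq τ ℓ₁) (t/s)
        + (Real.log s + Real.log (t/s))) := by nlinarith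
    _ = cM * (omegaSeq (fun q => assocSeq σ ℓ q * assocSeq τ ℓ₁ q) t
        + Real.log t) := by rw [heq, hlogsum]

/-- Part B: the weight equivalence. -/
lemma partB (hσ : IsW0 σ) (hτ : IsW0 τ) (hℓ : 0 < ℓ) (hℓ₁ : 0 < ℓ₁) :
    WeightEquiv (omegaSeq (fun p => assocSeq σ ℓ p * assocSeq τ ℓ₁ p))
      (lowerConj σ τ) := by
  constructor
  · rw [isBigO_iff]
    refine ⟨max (1/ℓ) (1/ℓ₁), ?_⟩
    filter_upwards [eventually_ge_atTop (1:ℝ)] with t ht1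
    have ht : (0:ℝ) < t := lt_of_lt_of_le one_pos ht1
    rw [Real.norm_eq_abs, Real.norm_eq_abs,
      abs_of_nonneg (pairOmega_nonneg hσ hτ hℓ hℓ₁ ht),
      abs_of_nonneg (lowerConj_nonneg hσ hτ t)]
    exact partB1 hσ hτ hℓ hℓ₁ ht
  · rw [isBigO_iff]
    set c1 : ℝ := aseq σ ℓ 1 + aseq τ ℓ₁ 1 with hc1
    have hc10 : 0 ≤ c1 := add_nonneg (aseq_nonneg hσ hℓ 1) (aseq_nonneg hτ hℓ₁ 1)
    refine ⟨max ℓ ℓ₁ * 3, ?_⟩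
    filter_upwards [eventually_ge_atTop (max 1 (Real.exp (2*c1)))] with t htT
    have ht1 : 1 ≤ t := le_trans (le_max_left _ _) htT
    have ht : (0:ℝ) < t := lt_of_lt_of_le one_pos ht1
    have hcM0 : 0 < max ℓ ℓ₁ := lt_max_of_lt_left hℓ
    have hlogt : 2*c1 ≤ Real.log t := by
      have h := Real.log_le_log (Real.exp_pos (2*c1))
        (le_trans (le_max_right _ _) htT)
      rwa [Real.log_exp] at h
    set Ω := omegaSeq (fun q => assocSeq σ ℓ q * assocSeq τ ℓ₁ q) t with hΩ
    have hΩlog : Real.log t - c1 ≤ Ω := pairOmega_ge_log hσ hτ hℓ hℓ₁ ht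
    have hc1Ω : c1 ≤ Ω := by linarith
    have hΩ0 : 0 ≤ Ω := pairOmega_nonneg hσ hτ hℓ hℓ₁ ht
    rw [Real.norm_eq_abs, Real.norm_eq_abs,
      abs_of_nonneg (lowerConj_nonneg hσ hτ t), abs_of_nonneg hΩ0]
    have h := partB2 hσ hτ hℓ hℓ₁ ht1
    have hlog2 : Real.log t ≤ 2 * Ω := by linarith
    calc lowerConj σ τ t ≤ max ℓ ℓ₁ * (Ω + Real.log t) := h
      _ ≤ max ℓ ℓ₁ * (Ω + 2 * Ω) := by nlinarith
      _ = max ℓ ℓ₁ * 3 * Ω := by ring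

end PartB
theorem stmt4 (σ τ : ℝ → ℝ) (hσ : IsW0 σ) (hτ : IsW0 τ) :
    (∀ ℓ : ℝ, 0 < ℓ → ∀ ℓ₁ : ℝ, 0 < ℓ₁ →
      (∀ t : ℝ, 0 ≤ t →
        omegaSeq (fun p => assocSeq σ ℓ p * assocSeq τ ℓ₁ p) t
          = lowerConj (omegaSeq (assocSeq σ ℓ)) (omegaSeq (assocSeq τ ℓ₁)) t) ∧
      WeightEquiv (omegaSeq (fun p => assocSeq σ ℓ p * assocSeq τ ℓ₁ p)) (lowerConj σ τ)) ∧
    (∀ ℓ : ℝ, 0 < ℓ → ∀ j : ℝ, 0 < j →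
      WeightEquiv (omegaSeq (fun p => assocSeq σ ℓ p * assocSeq τ ℓ p))
        (omegaSeq (fun p => assocSeq σ j p * assocSeq τ j p))) := by
  constructor
  · intro ℓ hℓ ℓ₁ hℓ₁
    exact ⟨fun t ht => partA hσ hτ hℓ hℓ₁ ht, partB hσ hτ hℓ hℓ₁⟩
  · intro ℓ hℓ j hj
    have h1 := partB hσ hτ hℓ hℓ
    have h2 := partB hσ hτ hj hj
    exact ⟨h1.1.trans h2.2, h2.1.trans h1.2⟩
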